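/- arXiv:2510.05850 — 5 statements merged into one kernel-verified Lean document; each statement's English description precedes it below -/
import Mathlib

section
/- Let κ ∈ (8/3,4), set q = 4·cos(πκ/4)² and ρ = 3κ/2 − 6. Then −2 < ρ < κ − 4, sin(πρ/2) − sin(π(κ−ρ)/2) ≠ 0, and sin(πρ/2)/(sin(πρ/2) − sin(π(κ−ρ)/2)) = 1 − 1/q. -/
theorem stmt_1 (κ q ρ : ℝ) (h1 : 8/3 < κ) (h2 : κ < 4)
    (hq : q = 4 * Real.cos (Real.pi * κ / 4) ^ 2)
    (hρ : ρ = 3 * κ / 2 - 6) :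
    -2 < ρ ∧ ρ < κ - 4 ∧
    Real.sin (Real.pi * ρ / 2) - Real.sin (Real.pi * (κ - ρ) / 2) ≠ 0 ∧
    Real.sin (Real.pi * ρ / 2) /
      (Real.sin (Real.pi * ρ / 2) - Real.sin (Real.pi * (κ - ρ) / 2)) = 1 - 1/q := by
  have hπ := Real.pi_pos
  set θ := Real.pi * κ / 4 with hθ
  have hθl : Real.pi / 2 < θ := by rw [hθ]; nlinarith
  have hθu : θ < Real.pi := by rw [hθ]; nlinarith
  have hθp : (0:ℝ) < θ := by rw [hθ]; nlinarith
  have hs : 0 < Real.sin θ := Real.sin_pos_of_pos_of_lt_pi hθp hθu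
  have hc : Real.cos θ < 0 :=
    Real.cos_neg_of_pi_div_two_lt_of_lt hθl (by nlinarith)
  have hq2 : 0 < q := by
    rw [hq]; nlinarith [mul_pos_of_neg_of_neg hc hc, sq_nonneg (Real.cos θ)]
  have hpy := Real.sin_sq_add_cos_sq θ
  have e1 : Real.pi * ρ / 2 = (3 * θ - Real.pi) - 2 * Real.pi := by
    rw [hρ, hθ]; ring
  have e2 : Real.pi * (κ - ρ) / 2 = (Real.pi - θ) + 2 * Real.pi := by
    rw [hρ, hθ]; ring
  have hA : Real.sin (Real.pi * ρ / 2) = -(Real.sin θ) * (q - 1) := by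
    rw [e1, Real.sin_sub_two_pi, Real.sin_sub_pi, Real.sin_three_mul, hq]
    linear_combination 4 * Real.sin θ * hpy
  have hB : Real.sin (Real.pi * (κ - ρ) / 2) = Real.sin θ := by
    rw [e2, Real.sin_add_two_pi, Real.sin_pi_sub]
  have hden : Real.sin (Real.pi * ρ / 2) - Real.sin (Real.pi * (κ - ρ) / 2)
      = -(Real.sin θ * q) := by rw [hA, hB]; ring
  refine ⟨by linarith, by linarith, ?_, ?_⟩
  · rw [hden]
    exact neg_ne_zero.mpr (mul_pos hs hq2).ne'
  · rw [hden, hA]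
    field_simp
end

section
/- Let κ, ρ, θ be real numbers; set x = κθ/4, y = ρθ/2, z = θ, p = sin(π(κ−2ρ−4)/4), q = sin(π(κ+2ρ−4)/4). Assume sin x ≠ 0, cos x ≠ 0, sin z ≠ 0, sin(x−y−z) ≠ 0, p ≠ 0, sin(π(4−κ)/κ) ≠ 0, sin(π(4−κ)/4) ≠ 0, sin(2π(ρ+2)/κ) ≠ 0, and p·sin(x+y+2z) + q·sin(y+2z−x) ≠ 0. Define T1 = (sin(π(4−κ)/4)·sin(2π(κ−ρ−4)/κ))/(sin(π(4−κ)/κ)·p) · sin(x−y−z)/sin x, T2 = (sin(π(4−κ)/4)·sin(2π(ρ+2)/κ))/(sin(π(4−κ)/κ)·p) · sin(y+2z−x)/sin x, T3 = (sin(π(4−κ)/κ)·sin(−πρ/2))/(sin(π(4−κ)/4)·sin(2π(ρ+2)/κ)) · sin(x−y−z)/sin z, T4 = (sin(π(4−κ)/κ)·p)/(sin(π(4−κ)/4)·sin(2π(ρ+2)/κ)) · sin(y+z)/sin z, Tc = cos(π(4−κ)/4)/cos x, and D = T3·Tc + T4. Then 1 − T2·D ≠ 0 and T1·D/(1 − T2·D)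 = (sin(2π(κ−ρ−4)/κ)/sin(2π(ρ+2)/κ)) · (p·sin(x+y+z) − q·sin(x−y−z))/(p·sin(x+y+2z) + q·sin(y+2z−x)). -/
lemma key_lemma (a b x y z p q : ℝ) (hpp : p = -Real.sin (a+b)) (hqq : q = Real.sin (b-a)) :
    Real.sin (x-y-z) * (p*Real.sin (y+z)*Real.cos x - Real.sin b*Real.cos a*Real.sin (x-y-z)) *
      (p*Real.sin (x+y+2*z)+q*Real.sin (y+2*z-x)) =
    (p*Real.sin (x+y+z)-q*Real.sin (x-y-z)) *
      (p*Real.sin x*Real.sin z*Real.cos x -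
        Real.sin (y+2*z-x)*(p*Real.sin (y+z)*Real.cos x - Real.sin b*Real.cos a*Real.sin (x-y-z))) := by
  subst hpp hqq
  have ha := Real.sin_sq_add_cos_sq a
  have hb := Real.sin_sq_add_cos_sq b
  have hx := Real.sin_sq_add_cos_sq x
  have hy := Real.sin_sq_add_cos_sq y
  have hz := Real.sin_sq_add_cos_sq z
  simp only [Real.sin_add, Real.cos_add, Real.sin_sub, Real.cos_sub, Real.sin_two_mul, Real.cos_two_mul]
  linear_combination ((-2:ℝ)*(Real.cos b)^2*(Real.sin x)*(Real.cos x)^2*(Real.cos y)*(Real.sin z)^2 + (2:ℝ)*(Real.cos b)^2*(Real.sin x)*(Real.cos x)^2*(Real.cos y)^3*(Real.sin z)^2 + (-2:ℝ)*(Real.cos b)^2*(Real.sin x)*(Real.cos x)^2*(Real.sin y)*(Real.sin z)*(Real.cos z) + (2:ℝ)*(Real.cos b)^2*(Real.sin x)*(Real.cos x)^2*(Real.sin y)*(Real.cos y)^2*(Real.sin z)*(Real.cos z) + (2:ℝ)*(Real.cos b)^2*(Real.sin x)*(Real.cos x)^2*(Real.sin y)^2*(Real.cos y)*(Real.sin z)^2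 + (2:ℝ)*(Real.cos b)^2*(Real.sin x)*(Real.cos x)^2*(Real.sin y)^3*(Real.sin z)*(Real.cos z)) * ha + ((-2:ℝ)*(Real.cos a)^2*(Real.sin x)^2*(Real.cos x)*(Real.cos y)*(Real.sin z)*(Real.cos z) + (2:ℝ)*(Real.cos a)^2*(Real.sin x)^2*(Real.cos x)*(Real.cos y)^3*(Real.sin z)*(Real.cos z) + (2:ℝ)*(Real.cos a)^2*(Real.sin x)^2*(Real.cos x)*(Real.sin y)*(Real.sin z)^2 + (-2:ℝ)*(Real.cos a)^2*(Real.sin x)^2*(Real.cos x)*(Real.sin y)*(Real.cos y)^2*(Real.sin z)^2 + (2:ℝ)*(Real.cos a)^2*(Real.sin x)^2*(Real.cos x)*(Real.sin y)^2*(Real.cos y)*(Real.sin z)*(Real.cos z) + (-2:ℝ)*(Real.cos a)^2*(Real.sin x)^2*(Real.cos x)*(Real.sin y)^3*(Real.sin z)^2) * hb + ((-2:ℝ)*(Real.cos a)^2*(Real.cos x)*(Real.cos y)*(Real.sin z)*(Real.cos z) + (2:ℝ)*(Real.cos a)^2*(Real.cos x)*(Real.cos y)^3*(Real.sin z)*(Real.cos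 z) + (2:ℝ)*(Real.cos a)^2*(Real.cos x)*(Real.sin y)*(Real.sin z)^2 + (-2:ℝ)*(Real.cos a)^2*(Real.cos x)*(Real.sin y)*(Real.cos y)^2*(Real.sin z)^2 + (2:ℝ)*(Real.cos a)^2*(Real.cos x)*(Real.sin y)^2*(Real.cos y)*(Real.sin z)*(Real.cos z) + (-2:ℝ)*(Real.cos a)^2*(Real.cos x)*(Real.sin y)^3*(Real.sin z)^2 + (2:ℝ)*(Real.cos a)^2*(Real.cos b)^2*(Real.cos x)*(Real.cos y)*(Real.sin z)*(Real.cos z) + (-2:ℝ)*(Real.cos a)^2*(Real.cos b)^2*(Real.cos x)*(Real.cos y)^3*(Real.sin z)*(Real.cos z) + (-2:ℝ)*(Real.cos a)^2*(Real.cos b)^2*(Real.cos x)*(Real.sin y)*(Real.sin z)^2 + (2:ℝ)*(Real.cos a)^2*(Real.cos b)^2*(Real.cos x)*(Real.sin y)*(Real.cos y)^2*(Real.sin z)^2 + (-2:ℝ)*(Real.cos a)^2*(Real.cos b)^2*(Real.cos x)*(Real.sin y)^2*(Real.cos y)*(Real.sin z)*(Real.cos z) + (2:ℝ)*(Real.cos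 a)^2*(Real.cos b)^2*(Real.cos x)*(Real.sin y)^3*(Real.sin z)^2 + (-2:ℝ)*(Real.sin a)*(Real.cos a)*(Real.sin b)*(Real.cos b)*(Real.cos x)*(Real.cos y)*(Real.sin z)*(Real.cos z) + (2:ℝ)*(Real.sin a)*(Real.cos a)*(Real.sin b)*(Real.cos b)*(Real.cos x)*(Real.cos y)^3*(Real.sin z)*(Real.cos z) + (2:ℝ)*(Real.sin a)*(Real.cos a)*(Real.sin b)*(Real.cos b)*(Real.cos x)*(Real.sin y)*(Real.sin z)^2 + (-2:ℝ)*(Real.sin a)*(Real.cos a)*(Real.sin b)*(Real.cos b)*(Real.cos x)*(Real.sin y)*(Real.cos y)^2*(Real.sin z)^2 + (2:ℝ)*(Real.sin a)*(Real.cos a)*(Real.sin b)*(Real.cos b)*(Real.cos x)*(Real.sin y)^2*(Real.cos y)*(Real.sin z)*(Real.cos z) + (-2:ℝ)*(Real.sin a)*(Real.cos a)*(Real.sin b)*(Real.cos b)*(Real.cos x)*(Real.sin y)^3*(Real.sin z)^2) * hx + ((2:ℝ)*(Real.cos b)^2*(Real.sin x)*(Real.cos x)^2*(Real.cos y)*(Real.sin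 z)^2 + (2:ℝ)*(Real.cos b)^2*(Real.sin x)*(Real.cos x)^2*(Real.sin y)*(Real.sin z)*(Real.cos z) + (2:ℝ)*(Real.cos a)^2*(Real.cos x)*(Real.cos y)*(Real.sin z)*(Real.cos z) + (-2:ℝ)*(Real.cos a)^2*(Real.cos x)*(Real.sin y)*(Real.sin z)^2 + (-2:ℝ)*(Real.cos a)^2*(Real.cos x)^3*(Real.cos y)*(Real.sin z)*(Real.cos z) + (2:ℝ)*(Real.cos a)^2*(Real.cos x)^3*(Real.sin y)*(Real.sin z)^2 + (-2:ℝ)*(Real.cos a)^2*(Real.cos b)^2*(Real.cos x)*(Real.cos y)*(Real.sin z)*(Real.cos z) + (2:ℝ)*(Real.cos a)^2*(Real.cos b)^2*(Real.cos x)*(Real.sin y)*(Real.sin z)^2 + (2:ℝ)*(Real.cos a)^2*(Real.cos b)^2*(Real.cos x)^3*(Real.cos y)*(Real.sin z)*(Real.cos z) + (-2:ℝ)*(Real.cos a)^2*(Real.cos b)^2*(Real.cos x)^3*(Real.sin y)*(Real.sin z)^2 + (-2:ℝ)*(Real.cos a)^2*(Real.cos b)^2*(Real.sin x)*(Real.cos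 x)^2*(Real.cos y)*(Real.sin z)^2 + (-2:ℝ)*(Real.cos a)^2*(Real.cos b)^2*(Real.sin x)*(Real.cos x)^2*(Real.sin y)*(Real.sin z)*(Real.cos z) + (2:ℝ)*(Real.sin a)*(Real.cos a)*(Real.sin b)*(Real.cos b)*(Real.cos x)*(Real.cos y)*(Real.sin z)*(Real.cos z) + (-2:ℝ)*(Real.sin a)*(Real.cos a)*(Real.sin b)*(Real.cos b)*(Real.cos x)*(Real.sin y)*(Real.sin z)^2 + (-2:ℝ)*(Real.sin a)*(Real.cos a)*(Real.sin b)*(Real.cos b)*(Real.cos x)^3*(Real.cos y)*(Real.sin z)*(Real.cos z) + (2:ℝ)*(Real.sin a)*(Real.cos a)*(Real.sin b)*(Real.cos b)*(Real.cos x)^3*(Real.sin y)*(Real.sin z)^2 + (2:ℝ)*(Real.sin a)*(Real.cos a)*(Real.sin b)*(Real.cos b)*(Real.sin x)*(Real.cos x)^2*(Real.cos y)*(Real.sin z)^2 + (2:ℝ)*(Real.sin a)*(Real.cos a)*(Real.sin b)*(Real.cos b)*(Real.sin x)*(Real.cos x)^2*(Real.sin y)*(Real.sin z)*(Real.cos z))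 * hy

theorem stmt_6 (κ ρ θ x y z p q T1 T2 T3 T4 Tc D : ℝ)
    (hx : x = κ*θ/4) (hy : y = ρ*θ/2) (hz : z = θ)
    (hp : p = Real.sin (Real.pi*(κ - 2*ρ - 4)/4))
    (hq : q = Real.sin (Real.pi*(κ + 2*ρ - 4)/4))
    (h1 : Real.sin x ≠ 0) (h2 : Real.cos x ≠ 0) (h3 : Real.sin z ≠ 0)
    (h4 : Real.sin (x - y - z) ≠ 0) (h5 : p ≠ 0)
    (h6 : Real.sin (Real.pi*(4 - κ)/κ) ≠ 0)
    (h7 : Real.sin (Real.pi*(4 - κ)/4) ≠ 0)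
    (h8 : Real.sin (2*Real.pi*(ρ + 2)/κ) ≠ 0)
    (h9 : p * Real.sin (x + y + 2*z) + q * Real.sin (y + 2*z - x) ≠ 0)
    (hT1 : T1 = (Real.sin (Real.pi*(4 - κ)/4) * Real.sin (2*Real.pi*(κ - ρ - 4)/κ)) /
        (Real.sin (Real.pi*(4 - κ)/κ) * p) * (Real.sin (x - y - z) / Real.sin x))
    (hT2 : T2 = (Real.sin (Real.pi*(4 - κ)/4) * Real.sin (2*Real.pi*(ρ + 2)/κ)) /
        (Real.sin (Real.pi*(4 - κ)/κ) * p) * (Real.sin (y + 2*z - x) / Real.sin x))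
    (hT3 : T3 = (Real.sin (Real.pi*(4 - κ)/κ) * Real.sin (-Real.pi*ρ/2)) /
        (Real.sin (Real.pi*(4 - κ)/4) * Real.sin (2*Real.pi*(ρ + 2)/κ)) *
        (Real.sin (x - y - z) / Real.sin z))
    (hT4 : T4 = (Real.sin (Real.pi*(4 - κ)/κ) * p) /
        (Real.sin (Real.pi*(4 - κ)/4) * Real.sin (2*Real.pi*(ρ + 2)/κ)) *
        (Real.sin (y + z) / Real.sin z))
    (hTc : Tc = Real.cos (Real.pi*(4 - κ)/4) / Real.cos x)
    (hD : D = T3*Tc + T4) :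
    1 - T2*D ≠ 0 ∧
    T1*D/(1 - T2*D) =
      (Real.sin (2*Real.pi*(κ - ρ - 4)/κ) / Real.sin (2*Real.pi*(ρ + 2)/κ)) *
        ((p * Real.sin (x + y + z) - q * Real.sin (x - y - z)) /
          (p * Real.sin (x + y + 2*z) + q * Real.sin (y + 2*z - x))) := by
  set a := Real.pi*(4 - κ)/4 with ha_def
  have hb_def : Real.pi*ρ/2 = Real.pi*ρ/2 := rfl
  set b := Real.pi*ρ/2 with hb_def
  have hp' : p = -Real.sin (a+b) := by
    rw [hp, show Real.pi*(κ - 2*ρ - 4)/4 = -(a+b) by rw [ha_def, hb_def]; ring, Real.sin_neg]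
  have hq' : q = Real.sin (b-a) := by
    rw [hq, show Real.pi*(κ + 2*ρ - 4)/4 = b-a by rw [ha_def, hb_def]; ring]
  have hrho : Real.sin (-Real.pi*ρ/2) = -Real.sin b := by
    rw [show -Real.pi*ρ/2 = -b by rw [hb_def]; ring, Real.sin_neg]
  rw [hrho] at hT3
  set N : ℝ := p*Real.sin (y+z)*Real.cos x - Real.sin b*Real.cos a*Real.sin (x-y-z) with hN_def
  set M : ℝ := p*Real.sin x*Real.sin z*Real.cos x with hM_def
  set K : ℝ := Real.sin (2*Real.pi*(κ - ρ - 4)/κ) with hK_def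
  set S : ℝ := Real.sin (2*Real.pi*(ρ + 2)/κ) with hS_def
  set B : ℝ := Real.sin (Real.pi*(4 - κ)/κ) with hB_def
  have key : Real.sin (x-y-z) * N * (p*Real.sin (x+y+2*z)+q*Real.sin (y+2*z-x)) =
      (p*Real.sin (x+y+z)-q*Real.sin (x-y-z)) * (M - Real.sin (y+2*z-x)*N) := by
    rw [hN_def, hM_def]; exact key_lemma a b x y z p q hp' hq'
  have hM : M ≠ 0 := by
    rw [hM_def]; exact mul_ne_zero (mul_ne_zero (mul_ne_zero h5 h1) h3) h2
  have hDen : M - Real.sin (y+2*z-x)*N ≠ 0 := by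
    intro h0
    have hN0 : N = 0 := by
      have := key
      rw [h0, mul_zero] at this
      rcases mul_eq_zero.1 this with h' | h'
      · rcases mul_eq_zero.1 h' with h'' | h''
        · exact absurd h'' h4
        · exact h''
      · exact absurd h' h9
    rw [hN0, mul_zero, sub_zero] at h0
    exact hM h0
  have h1m : 1 - T2*D = (M - Real.sin (y+2*z-x)*N)/M := by
    rw [hT2, hD, hT3, hT4, hTc, hN_def, hM_def]
    field_simp
    ring
  have hT1D : T1*D = K*(Real.sin (x-y-z)*N)/(S*M) := by
    rw [hT1, hD, hT3, hT4, hTc, hN_def, hM_def]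
    field_simp
    ring
  constructor
  · rw [h1m]
    exact div_ne_zero hDen hM
  · rw [hT1D, h1m]
    have step : K*(Real.sin (x-y-z)*N)/(S*M) / ((M - Real.sin (y+2*z-x)*N)/M) =
        K*(Real.sin (x-y-z)*N)/(S*(M - Real.sin (y+2*z-x)*N)) := by
      rw [div_div_div_eq]
      rw [div_eq_div_iff (by exact mul_ne_zero (mul_ne_zero h8 hM) hDen)
        (mul_ne_zero h8 hDen)]
      ring
    rw [step, div_mul_div_comm]
    rw [div_eq_div_iff (mul_ne_zero h8 hDen) (mul_ne_zero h8 h9)]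
    linear_combination (K*S)*key
end

section
/- Let κ ∈ (8/3,4), set ρ = 3κ/2 − 6, p = sin(π(κ−2ρ−4)/4) and q = sin(π(κ+2ρ−4)/4), and let θ be a real number with sin((κ−1)θ) + 2cos(π(4−κ)/2)·sin((1−κ/2)θ) ≠ 0. Then (sin(2π(κ−ρ−4)/κ)/sin(2π(ρ+2)/κ)) · (p·sin((κ+2ρ+4)θ/4) − q·sin((κ−2ρ−4)θ/4))/(p·sin((κ+2ρ+8)θ/4) − q·sin((κ−2ρ−8)θ/4)) = (1/(2cos(π(4−κ)/κ))) · (sin((κ−2)θ) + 2cos(π(4−κ)/2)·sin((2−κ/2)θ))/(sin((κ−1)θ) + 2cos(π(4−κ)/2)·sin((1−κ/2)θ)), and moreover the denominator p·sin((κ+2ρ+8)θ/4) − q·sin((κ−2ρ−8)θ/4) is nonzero. -/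
theorem stmt_7 (κ ρ p q θ : ℝ) (h1 : 8/3 < κ) (h2 : κ < 4)
    (hρ : ρ = 3*κ/2 - 6)
    (hp : p = Real.sin (Real.pi*(κ - 2*ρ - 4)/4))
    (hq : q = Real.sin (Real.pi*(κ + 2*ρ - 4)/4))
    (hden : Real.sin ((κ - 1)*θ) +
        2*Real.cos (Real.pi*(4 - κ)/2) * Real.sin ((1 - κ/2)*θ) ≠ 0) :
    (Real.sin (2*Real.pi*(κ - ρ - 4)/κ) / Real.sin (2*Real.pi*(ρ + 2)/κ)) *
        ((p * Real.sin ((κ + 2*ρ + 4)*θ/4) - q * Real.sin ((κ - 2*ρ - 4)*θ/4)) /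
          (p * Real.sin ((κ + 2*ρ + 8)*θ/4) - q * Real.sin ((κ - 2*ρ - 8)*θ/4))) =
      (1/(2*Real.cos (Real.pi*(4 - κ)/κ))) *
        ((Real.sin ((κ - 2)*θ) + 2*Real.cos (Real.pi*(4 - κ)/2) * Real.sin ((2 - κ/2)*θ)) /
          (Real.sin ((κ - 1)*θ) + 2*Real.cos (Real.pi*(4 - κ)/2) * Real.sin ((1 - κ/2)*θ))) ∧
    p * Real.sin ((κ + 2*ρ + 8)*θ/4) - q * Real.sin ((κ - 2*ρ - 8)*θ/4) ≠ 0 := by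
  have hκ : (0:ℝ) < κ := by linarith
  have hπ := Real.pi_pos
  subst hρ hp hq
  have s4 : Real.sin (4*Real.pi) = 0 := by
    rw [show (4:ℝ)*Real.pi = 2*Real.pi + 2*Real.pi by ring, Real.sin_add_two_pi,
      Real.sin_two_pi]
  have c4 : Real.cos (4*Real.pi) = 1 := by
    rw [show (4:ℝ)*Real.pi = 2*Real.pi + 2*Real.pi by ring, Real.cos_add_two_pi,
      Real.cos_two_pi]
  set x := Real.pi*(4 - κ)/2 with hx
  set a := Real.pi*(4 - κ)/κ with ha
  have hxpos : 0 < x := div_pos (mul_pos hπ (by linarith)) (by norm_num)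
  have hxlt : x < Real.pi := by rw [hx]; nlinarith
  have hsinx : 0 < Real.sin x := Real.sin_pos_of_pos_of_lt_pi hxpos hxlt
  have hapos : 0 < a := div_pos (mul_pos hπ (by linarith)) hκ
  have halt : a < Real.pi/2 := by
    rw [ha, div_lt_div_iff₀ hκ (by norm_num : (0:ℝ) < 2)]
    nlinarith
  have hsina : 0 < Real.sin a :=
    Real.sin_pos_of_pos_of_lt_pi hapos (by linarith)
  have hcosa : 0 < Real.cos a :=
    Real.cos_pos_of_mem_Ioo ⟨by linarith, halt⟩
  have hp' : Real.sin (Real.pi*(κ - 2*(3*κ/2 - 6) - 4)/4) = Real.sin x := by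
    rw [hx]; congr 1; ring
  have hq' : Real.sin (Real.pi*(κ + 2*(3*κ/2 - 6) - 4)/4)
      = -(2*Real.sin x*Real.cos x) := by
    rw [← Real.sin_two_mul, hx,
      show Real.pi*(κ + 2*(3*κ/2 - 6) - 4)/4 = Real.pi*κ - 4*Real.pi by ring,
      show 2*(Real.pi*(4 - κ)/2) = 4*Real.pi - Real.pi*κ by ring,
      Real.sin_sub, Real.sin_sub, s4, c4]
    ring
  have hA1 : Real.sin (2*Real.pi*(κ - (3*κ/2 - 6) - 4)/κ) = Real.sin a := by
    rw [ha]; congr 1; ring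
  have hA2 : Real.sin (2*Real.pi*((3*κ/2 - 6) + 2)/κ) = 2*Real.sin a*Real.cos a := by
    rw [show 2*Real.pi*((3*κ/2 - 6) + 2)/κ = Real.pi - 2*a by
        rw [ha]; field_simp; ring,
      Real.sin_pi_sub, Real.sin_two_mul]
  have hB1 : (κ + 2*(3*κ/2 - 6) + 4)*θ/4 = (κ - 2)*θ := by ring
  have hB2 : (κ - 2*(3*κ/2 - 6) - 4)*θ/4 = (2 - κ/2)*θ := by ring
  have hB3 : (κ + 2*(3*κ/2 - 6) + 8)*θ/4 = (κ - 1)*θ := by ring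
  have hB4 : (κ - 2*(3*κ/2 - 6) - 8)*θ/4 = (1 - κ/2)*θ := by ring
  rw [hp', hq', hA1, hA2, hB1, hB2, hB3, hB4]
  have hden' : Real.sin x * Real.sin ((κ - 1)*θ)
      - -(2*Real.sin x*Real.cos x) * Real.sin ((1 - κ/2)*θ) ≠ 0 := by
    have heq : Real.sin x * Real.sin ((κ - 1)*θ)
        - -(2*Real.sin x*Real.cos x) * Real.sin ((1 - κ/2)*θ)
        = Real.sin x * (Real.sin ((κ - 1)*θ)
          + 2*Real.cos x * Real.sin ((1 - κ/2)*θ)) := by ring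
    rw [heq]
    exact mul_ne_zero hsinx.ne' hden
  refine ⟨?_, hden'⟩
  have e1 : Real.sin a/(2*Real.sin a*Real.cos a) = 1/(2*Real.cos a) := by
    rw [div_eq_div_iff (by positivity) (by positivity)]; ring
  have e2 : Real.sin x * Real.sin ((κ - 2)*θ)
      - -(2*Real.sin x*Real.cos x) * Real.sin ((2 - κ/2)*θ)
      = Real.sin x * (Real.sin ((κ - 2)*θ)
        + 2*Real.cos x * Real.sin ((2 - κ/2)*θ)) := by ring
  have e3 : Real.sin x * Real.sin ((κ - 1)*θ)
      - -(2*Real.sin x*Real.cos x) * Real.sin ((1 - κ/2)*θ)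
      = Real.sin x * (Real.sin ((κ - 1)*θ)
        + 2*Real.cos x * Real.sin ((1 - κ/2)*θ)) := by ring
  rw [e1, e2, e3, mul_div_mul_left _ _ hsinx.ne']
end

section
/- Let κ ∈ (8/3,4), set θ(λ) = (π/κ)·√((4−κ)² − 8κλ), and define F : ℝ → ℝ near 0 by F(λ) = (1/(2cos(π(4−κ)/κ))) · (sin((κ−2)·θ(λ)) + 2cos(π(4−κ)/2)·sin((2−κ/2)·θ(λ)))/(sin((κ−1)·θ(λ)) + 2cos(π(4−κ)/2)·sin((1−κ/2)·θ(λ))). Then F has derivative at λ = 0 equal to (4π/(4−κ))·(2·sin²(4π/κ) − κ·sin²(κπ/2))/sin(8π/κ). -/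
/-!
At `s = θ(0) = π(4-κ)/κ` the angle `w = π(4-κ)/2` of the constant `cos w` in the formula
satisfies `κ s = 2 w`, so the four angles `(κ-2)s, (2-κ/2)s, (κ-1)s, (1-κ/2)s` are
`2w-2s, 2s-w, 2w-s, s-w`. Product-to-sum then collapses the numerator and denominator at `s` to
`sin 2s` and `sin s`, and their derivatives `N'`, `D'` satisfy
`N' - 2 cos s · D' = κ sin² w - 2 sin² s`. The quotient rule and the chain rule with
`θ'(0) = -4π/(4-κ)` give the value, once `4π/κ = s + π`, `κπ/2 = 2π - w` and
`8π/κ = 2s + 2π`.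
-/

open Real

theorem hasDerivAt_sin_mul_add_mul_sin_mul (a b c t : ℝ) :
    HasDerivAt (fun t => sin (a * t) + c * sin (b * t))
      (a * cos (a * t) + c * (b * cos (b * t))) t := by
  have ha := (hasDerivAt_const_mul a (x := t)).sin
  have hb := ((hasDerivAt_const_mul b (x := t)).sin).const_mul c
  refine (ha.add hb).congr_deriv ?_
  ring

theorem hasDerivAt_mul_sqrt_sub_mul (a c k : ℝ) {x : ℝ} (hx : c - k * x ≠ 0) :
    HasDerivAt (fun l => a * √(c - k * l)) (-(a * k) / (2 * √(c - k * x))) x := by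
  have h := (((hasDerivAt_const_mul k (x := x)).const_sub c).sqrt hx).const_mul a
  exact h.congr_deriv (by ring)

namespace MomentRatio

variable {κ s w : ℝ}

theorem num_eq_sin_two_mul (h : κ * s = 2 * w) :
    sin ((κ - 2) * s) + 2 * cos w * sin ((2 - κ / 2) * s) = sin (2 * s) := by
  rw [show (κ - 2) * s = 2 * w - 2 * s by linear_combination h,
    show (2 - κ / 2) * s = 2 * s - w by linear_combination -h / 2]
  simp only [sin_sub, sin_two_mul, cos_two_mul]
  ring

theorem den_eq_sin (h : κ * s = 2 * w) :
    sin ((κ - 1) * s) + 2 * cos w * sin ((1 - κ / 2) * s) = sin s := by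
  rw [show (κ - 1) * s = 2 * w - s by linear_combination h,
    show (1 - κ / 2) * s = s - w by linear_combination -h / 2]
  simp only [sin_sub, sin_two_mul, cos_two_mul]
  ring

theorem deriv_num_eq (h : κ * s = 2 * w) :
    (κ - 2) * cos ((κ - 2) * s) + 2 * cos w * ((2 - κ / 2) * cos ((2 - κ / 2) * s)) =
      2 * cos s *
          ((κ - 1) * cos ((κ - 1) * s) + 2 * cos w * ((1 - κ / 2) * cos ((1 - κ / 2) * s))) +
        (κ * sin w ^ 2 - 2 * sin s ^ 2) := by
  rw [show (κ - 2) * s = 2 * w - 2 * s by linear_combination h,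
    show (2 - κ / 2) * s = 2 * s - w by linear_combination -h / 2,
    show (κ - 1) * s = 2 * w - s by linear_combination h,
    show (1 - κ / 2) * s = s - w by linear_combination -h / 2]
  simp only [cos_sub, sin_two_mul, cos_two_mul]
  linear_combination 2 * sin_sq_add_cos_sq s - κ * sin_sq_add_cos_sq w

end MomentRatio

theorem stmt_14 (κ : ℝ) (h1 : 8/3 < κ) (h2 : κ < 4) :
    HasDerivAt (fun l : ℝ =>
        (1/(2*Real.cos (Real.pi*(4 - κ)/κ))) *
          ((Real.sin ((κ - 2) * (Real.pi/κ * Real.sqrt ((4 - κ)^2 - 8*κ*l))) +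
              2*Real.cos (Real.pi*(4 - κ)/2) *
                Real.sin ((2 - κ/2) * (Real.pi/κ * Real.sqrt ((4 - κ)^2 - 8*κ*l)))) /
            (Real.sin ((κ - 1) * (Real.pi/κ * Real.sqrt ((4 - κ)^2 - 8*κ*l))) +
              2*Real.cos (Real.pi*(4 - κ)/2) *
                Real.sin ((1 - κ/2) * (Real.pi/κ * Real.sqrt ((4 - κ)^2 - 8*κ*l))))))
      (4*Real.pi/(4 - κ) *
        (2*Real.sin (4*Real.pi/κ)^2 - κ*Real.sin (κ*Real.pi/2)^2) /
        Real.sin (8*Real.pi/κ)) 0 := by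
  have hκ : 0 < κ := by linarith
  have hb : 0 < 4 - κ := by linarith
  set s := π * (4 - κ) / κ with hs
  set w := π * (4 - κ) / 2 with hw
  have hκs : κ * s = 2 * w := by rw [hs, hw]; field_simp
  have hs_pos : 0 < s := by positivity
  have hs_lt : s < π / 2 := by rw [hs, div_lt_iff₀ hκ]; nlinarith [pi_pos]
  have hsin : 0 < sin s := sin_pos_of_pos_of_lt_pi hs_pos (by linarith [pi_pos])
  have hcos : 0 < cos s := cos_pos_of_mem_Ioo ⟨by linarith, hs_lt⟩
  have hsqrt : √((4 - κ) ^ 2 - 8 * κ * 0) = 4 - κ := by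
    rw [mul_zero, sub_zero, sqrt_sq hb.le]
  have hθ := hasDerivAt_mul_sqrt_sub_mul (π / κ) ((4 - κ) ^ 2) (8 * κ) (x := 0)
    (by rw [mul_zero, sub_zero]; positivity)
  have hθ0 : s = π / κ * √((4 - κ) ^ 2 - 8 * κ * 0) := by rw [hsqrt, hs]; ring
  have hG := (hasDerivAt_sin_mul_add_mul_sin_mul (κ - 2) (2 - κ / 2) (2 * cos w) s).div
    (hasDerivAt_sin_mul_add_mul_sin_mul (κ - 1) (1 - κ / 2) (2 * cos w) s)
    (by rw [MomentRatio.den_eq_sin hκs]; exact hsin.ne')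
  refine ((hG.comp_of_eq 0 hθ hθ0).const_mul _).congr_deriv ?_
  rw [MomentRatio.num_eq_sin_two_mul hκs, MomentRatio.den_eq_sin hκs,
    MomentRatio.deriv_num_eq hκs, hsqrt,
    show 4 * π / κ = s + π by rw [hs]; field_simp; ring,
    show κ * π / 2 = 2 * π - w by rw [hw]; field_simp; ring,
    show 8 * π / κ = 2 * s + 2 * π by rw [hs]; field_simp; ring,
    sin_add_pi, sin_two_pi_sub, sin_add_two_pi, sin_two_mul]
  field_simp
  ring
end

section
/- Let κ ∈ (8/3,4) and set D_R = −(4π/(4−κ))·tan(4π/κ) and D_B = (4π/(4−κ))·(2·sin²(4π/κ) − κ·sin²(κπ/2))/sin(8π/κ). Then D_R ≠ 0, (D_R + D_B)/D_R = κ·sin²(κπ/2)/(2·sin²(4π/κ)), this quantity is positive, and its real square root equals √(κ/2)·sin(κπ/2)/sin(4π/κ). -/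
theorem stmt_15 (κ DR DB : ℝ) (h1 : 8/3 < κ) (h2 : κ < 4)
    (hDR : DR = -(4*Real.pi/(4 - κ)) * Real.tan (4*Real.pi/κ))
    (hDB : DB = 4*Real.pi/(4 - κ) *
        (2*Real.sin (4*Real.pi/κ)^2 - κ*Real.sin (κ*Real.pi/2)^2) /
        Real.sin (8*Real.pi/κ)) :
    DR ≠ 0 ∧
    (DR + DB)/DR = κ * Real.sin (κ*Real.pi/2)^2 / (2 * Real.sin (4*Real.pi/κ)^2) ∧
    0 < (DR + DB)/DR ∧
    Real.sqrt ((DR + DB)/DR) =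
      Real.sqrt (κ/2) * Real.sin (κ*Real.pi/2) / Real.sin (4*Real.pi/κ) := by
  have hpi := Real.pi_pos
  have hκ0 : (0:ℝ) < κ := by linarith
  have hθπ : Real.pi < 4*Real.pi/κ := by
    rw [lt_div_iff₀ hκ0]; nlinarith
  have hθ32 : 4*Real.pi/κ < 3*Real.pi/2 := by
    rw [div_lt_iff₀ hκ0]; nlinarith
  -- sin θ < 0
  have ha : Real.sin (4*Real.pi/κ) < 0 := by
    have h := Real.sin_pos_of_pos_of_lt_pi (x := 4*Real.pi/κ - Real.pi)
      (by linarith) (by linarith)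
    have : Real.sin (4*Real.pi/κ - Real.pi) = - Real.sin (4*Real.pi/κ) := by
      rw [Real.sin_sub, Real.sin_pi, Real.cos_pi]; ring
    linarith [this ▸ h]
  -- cos θ < 0
  have hc : Real.cos (4*Real.pi/κ) < 0 := by
    have h := Real.cos_pos_of_mem_Ioo (x := 4*Real.pi/κ - Real.pi)
      ⟨by linarith, by linarith⟩
    have : Real.cos (4*Real.pi/κ - Real.pi) = - Real.cos (4*Real.pi/κ) := by
      rw [Real.cos_sub, Real.sin_pi, Real.cos_pi]; ring
    linarith [this ▸ h]
  -- sin(κπ/2) < 0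
  have hs : Real.sin (κ*Real.pi/2) < 0 := by
    have h1' : Real.pi < κ*Real.pi/2 := by nlinarith
    have h2' : κ*Real.pi/2 < 2*Real.pi := by nlinarith
    have h := Real.sin_pos_of_pos_of_lt_pi (x := κ*Real.pi/2 - Real.pi)
      (by linarith) (by linarith)
    have : Real.sin (κ*Real.pi/2 - Real.pi) = - Real.sin (κ*Real.pi/2) := by
      rw [Real.sin_sub, Real.sin_pi, Real.cos_pi]; ring
    linarith [this ▸ h]
  have ha0 : Real.sin (4*Real.pi/κ) ≠ 0 := ne_of_lt ha
  have hc0 : Real.cos (4*Real.pi/κ) ≠ 0 := ne_of_lt hc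
  have hs0 : Real.sin (κ*Real.pi/2) ≠ 0 := ne_of_lt hs
  have h4κ : (4:ℝ) - κ ≠ 0 := by linarith
  have hKpos : 0 < 4*Real.pi/(4 - κ) := div_pos (by positivity) (by linarith)
  have htan : Real.tan (4*Real.pi/κ) =
      Real.sin (4*Real.pi/κ) / Real.cos (4*Real.pi/κ) := Real.tan_eq_sin_div_cos _
  have h8 : Real.sin (8*Real.pi/κ) =
      2 * Real.sin (4*Real.pi/κ) * Real.cos (4*Real.pi/κ) := by
    have : 8*Real.pi/κ = 2*(4*Real.pi/κ) := by ring
    rw [this, Real.sin_two_mul]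
  have hDRne : DR ≠ 0 := by
    rw [hDR, htan]
    have h1' : Real.sin (4*Real.pi/κ) / Real.cos (4*Real.pi/κ) > 0 :=
      div_pos_of_neg_of_neg ha hc
    intro h
    rcases mul_eq_zero.mp h with h' | h'
    · exact absurd (neg_eq_zero.mp h') hKpos.ne'
    · linarith
  have hratio : (DR + DB)/DR =
      κ * Real.sin (κ*Real.pi/2)^2 / (2 * Real.sin (4*Real.pi/κ)^2) := by
    rw [hDR, hDB, htan, h8]
    field_simp
    ring
  refine ⟨hDRne, hratio, ?_, ?_⟩
  · rw [hratio]; positivity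
  · rw [hratio]
    have hsa : 0 < Real.sin (κ*Real.pi/2) / Real.sin (4*Real.pi/κ) :=
      div_pos_of_neg_of_neg hs ha
    have heq : κ * Real.sin (κ*Real.pi/2)^2 / (2 * Real.sin (4*Real.pi/κ)^2)
        = (κ/2) * (Real.sin (κ*Real.pi/2) / Real.sin (4*Real.pi/κ))^2 := by
      field_simp
    rw [heq, Real.sqrt_mul (by positivity), Real.sqrt_sq hsa.le]
    ring
end
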